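/- Agreement is strictly weaker than compliance: for P = ā.c̄ ⊕ b̄ and Q = a + b, P is not compliant with Q, yet participant A has a winning strategy in 𝓒_A(P) | 𝓒_B(Q) (namely, always choosing the b̄ branch). -/

import Mathlib

namespace ESC

/-- Labelled event structure data: events, conflict, enabling, labelling (relational). -/
structure LES (Ev Act : Type) where
  events : Set Ev
  conf : Ev → Ev → Prop
  enab : Set Ev → Ev → Prop
  lab : Ev → Act → Prop

/-- Conflict-freeness of a set of events. -/
def CF {Ev : Type} (C : Ev → Ev → Prop) (X : Set Ev) : Prop :=
  ∀ e ∈ X, ∀ e' ∈ X, ¬ C e e'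

/-- Well-formedness: irreflexive symmetric conflict, saturated enabling over
finite conflict-free subsets, labelling a (partial) function on events. -/
structure IsES {Ev Act : Type} (E : LES Ev Act) : Prop where
  conf_mem : ∀ e e', E.conf e e' → e ∈ E.events ∧ e' ∈ E.events
  conf_irrefl : ∀ e, ¬ E.conf e e
  conf_symm : ∀ e e', E.conf e e' → E.conf e' e
  enab_dom : ∀ X e, E.enab X e → X ⊆ E.events ∧ e ∈ E.events ∧ X.Finite ∧ CF E.conf X
  saturated : ∀ X Y e, E.enab X e → X ⊆ Y → Y ⊆ E.events → Y.Finite → CF E.conf Y → E.enab Y e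
  lab_dom : ∀ e a, E.lab e a → e ∈ E.events
  lab_fun : ∀ e a b, E.lab e a → E.lab e b → a = b
  lab_total : ∀ e ∈ E.events, ∃ a, E.lab e a

/-- The order ⊴ on event structures. -/
def leES {Ev Act : Type} (E E' : LES Ev Act) : Prop :=
  E.events ⊆ E'.events ∧
  (∀ e e', E.conf e e' → E'.conf e e') ∧
  (∀ X e, E.enab X e → E'.enab X e) ∧
  (∀ e ∈ E.events, ∀ a, E.lab e a ↔ E'.lab e a) ∧
  (∀ e e', e ∈ E.events → e' ∈ E.events → E'.conf e e' → E.conf e e') ∧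
  (∀ X e, X ⊆ E.events → e ∈ E.events → E'.enab X e → E.enab X e)

/-- The empty event structure. -/
def emptyES {Ev Act : Type} : LES Ev Act :=
  ⟨∅, fun _ _ => False, fun _ _ => False, fun _ _ => False⟩

/-- Componentwise union of a countable family of event structures. -/
def unionES {Ev Act : Type} (c : ℕ → LES Ev Act) : LES Ev Act :=
  ⟨⋃ n, (c n).events,
   fun e e' => ∃ n, (c n).conf e e',
   fun X e => ∃ n, (c n).enab X e,
   fun e a => ∃ n, (c n).lab e a⟩

/-- Least fixed point (Kleene iteration from the empty ES). -/
def fixES {Ev Act : Type} (F : LES Ev Act → LES Ev Act) : LES Ev Act :=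
  unionES (fun n => F^[n] emptyES)

/-- Events surviving after executing `e`. -/
def remEvents {Ev Act : Type} (E : LES Ev Act) (e : Ev) : Set Ev :=
  E.events \ ({e} ∪ {e' | E.conf e e'})

/-- Remainder `E[e]` of an event structure after executing `e`. -/
def remainder {Ev Act : Type} (E : LES Ev Act) (e : Ev) : LES Ev Act where
  events := remEvents E e
  conf := fun e1 e2 => E.conf e1 e2 ∧ e1 ∈ remEvents E e ∧ e2 ∈ remEvents E e
  enab := fun X e' => ∃ Y, E.enab Y e' ∧ e' ≠ e ∧ ¬ E.conf e' e ∧ CF E.conf (Y ∪ {e}) ∧ X = Y \ {e}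
  lab := fun e' a => E.lab e' a ∧ e' ∈ remEvents E e

/-- Finite plays (as lists), via iterated remainders. -/
def isPlayL {Ev Act : Type} : LES Ev Act → List Ev → Prop
  | _, [] => True
  | E, e :: σ => E.enab ∅ e ∧ isPlayL (remainder E e) σ

/-- The set of events occurring among the first `i` positions of `σ`. -/
def prefixSet {Ev : Type} (σ : ℕ → Option Ev) (i : ℕ) : Set Ev :=
  {e | ∃ j, j < i ∧ σ j = some e}

/-- The list of the first `i` events of `σ`. -/
def prefixList {Ev : Type} (σ : ℕ → Option Ev) : ℕ → List Ev
  | 0 => []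
  | i + 1 => prefixList σ i ++ (σ i).toList

/-- The remainder of `E` after the first `i` events of `σ`. -/
def remAfter {Ev Act : Type} (E : LES Ev Act) (σ : ℕ → Option Ev) : ℕ → LES Ev Act
  | 0 => E
  | i + 1 =>
    match σ i with
    | none => remAfter E σ i
    | some e => remainder (remAfter E σ i) e

/-- Plays, possibly infinite: `σ i = none` means the play has ended before `i`. -/
def IsPlay {Ev Act : Type} (E : LES Ev Act) (σ : ℕ → Option Ev) : Prop :=
  (∀ i j, i ≤ j → σ i = none → σ j = none) ∧
  (∀ i e, σ i = some e → (remAfter E σ i).enab ∅ e)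

/-- Innocence of participant `A` in the play `σ`. -/
def Innocent {Ev Act Ppt : Type} (π : Ev → Ppt) (E : LES Ev Act) (A : Ppt)
    (σ : ℕ → Option Ev) : Prop :=
  ∀ i e, π e = A → E.enab (prefixSet σ i) e →
    ∃ j, i ≤ j ∧ ∃ e', σ j = some e' ∧ (E.conf e' e ∨ e' = e)

/-- Strategies for `A`: map finite plays to sets of `A`'s events extending the play. -/
def IsStrategy {Ev Act Ppt : Type} (π : Ev → Ppt) (E : LES Ev Act) (A : Ppt)
    (S : List Ev → Set Ev) : Prop :=
  ∀ σ, isPlayL E σ → ∀ e ∈ S σ, π e = A ∧ isPlayL E (σ ++ [e])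

/-- `σ` conforms to strategy `S` for participant `A`. -/
def Conforms {Ev Ppt : Type} (π : Ev → Ppt) (A : Ppt) (S : List Ev → Set Ev)
    (σ : ℕ → Option Ev) : Prop :=
  ∀ i e, σ i = some e → π e = A → e ∈ S (prefixList σ i)

/-- Position `j` is within the play `σ`. -/
def validPos {Ev : Type} (σ : ℕ → Option Ev) (j : ℕ) : Prop :=
  ∀ k, k < j → σ k ≠ none

/-- Fairness of `σ` w.r.t. strategy `S`: permanently prescribed events happen. -/
def FairW {Ev : Type} (S : List Ev → Set Ev) (σ : ℕ → Option Ev) : Prop :=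
  ∀ i e, validPos σ i →
    (∀ j, i ≤ j → validPos σ j → e ∈ S (prefixList σ j)) →
    ∃ h, i ≤ h ∧ σ h = some e

/-- A contract: a labelled ES plus a partial payoff assignment. -/
structure Contract (Ev Act Ppt : Type) where
  es : LES Ev Act
  payoff : Ppt → Option (Set (ℕ → Option Ev))

/-- Winning plays of `A`. -/
def Wins {Ev Act Ppt : Type} (π : Ev → Ppt) (C : Contract Ev Act Ppt) (A : Ppt)
    (σ : ℕ → Option Ev) : Prop :=
  (∃ S, C.payoff A = some S ∧ σ ∈ S ∧ ∀ B : Ppt, Innocent π C.es B σ) ∨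
  (Innocent π C.es A σ ∧ ∃ B : Ppt, B ≠ A ∧ ¬ Innocent π C.es B σ)

/-- `S` is a winning strategy for `A` in `C`. -/
def WinningFor {Ev Act Ppt : Type} (π : Ev → Ppt) (C : Contract Ev Act Ppt) (A : Ppt)
    (S : List Ev → Set Ev) : Prop :=
  IsStrategy π C.es A S ∧
  ∀ σ, IsPlay C.es σ → Conforms π A S σ → FairW S σ → Wins π C A σ

/-- The eager strategy of `A`: do all currently enabled events of `A`. -/
def eager {Ev Act Ppt : Type} (π : Ev → Ppt) (E : LES Ev Act) (A : Ppt)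
    (σ : List Ev) : Set Ev :=
  {e | π e = A ∧ E.enab {x | x ∈ σ} e}

/-- Composability of contracts: payoff domains are disjoint. -/
def Composable {Ev Act Ppt : Type} (C C' : Contract Ev Act Ppt) : Prop :=
  ∀ A : Ppt, C.payoff A = none ∨ C'.payoff A = none

/-- Plain (componentwise-union) composition of contracts. -/
def ccompU {Ev Act Ppt : Type} (C C' : Contract Ev Act Ppt) : Contract Ev Act Ppt :=
  ⟨⟨C.es.events ∪ C'.es.events,
    fun e e' => C.es.conf e e' ∨ C'.es.conf e e',
    fun X e => C.es.enab X e ∨ C'.es.enab X e,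
    fun e a => C.es.lab e a ∨ C'.es.lab e a⟩,
   fun A => (C.payoff A).orElse (fun _ => C'.payoff A)⟩

/-! ### Binary session types -/

/-- Session types (binary choices encode finite non-empty choices), extended with
committed branches `comm`, one-position buffers `buf`, and the stuck state `zero`. -/
inductive Proc (Act : Type) where
  | success : Proc Act
  | send : Act → Proc Act → Proc Act      -- ā.P as an internal branch
  | recv : Act → Proc Act → Proc Act      -- a.P as an external branch
  | ichoice : Proc Act → Proc Act → Proc Act  -- ⊕
  | echoice : Proc Act → Proc Act → Proc Act  -- +
  | var : ℕ → Proc Act                    -- de Bruijn variable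
  | recur : Proc Act → Proc Act             -- rec x.P
  | comm : Act → Proc Act → Proc Act      -- committed internal branch ā.P
  | buf : Act → Proc Act → Proc Act       -- [ā]P
  | zero : Proc Act                       -- 0

/-- Branches of an internal choice. -/
inductive IBr {Act : Type} : Proc Act → Act → Proc Act → Prop where
  | send {a P} : IBr (Proc.send a P) a P
  | il {P Q a R} : IBr P a R → IBr (Proc.ichoice P Q) a R
  | ir {P Q a R} : IBr Q a R → IBr (Proc.ichoice P Q) a R

/-- Branches of an external choice. -/
inductive EBr {Act : Type} : Proc Act → Act → Proc Act → Prop where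
  | recv {a P} : EBr (Proc.recv a P) a P
  | el {P Q a R} : EBr P a R → EBr (Proc.echoice P Q) a R
  | er {P Q a R} : EBr Q a R → EBr (Proc.echoice P Q) a R

/-- Substitution of `Q` for de Bruijn variable `k`. -/
def subst {Act : Type} (Q : Proc Act) : ℕ → Proc Act → Proc Act
  | _, .success => .success
  | k, .send a P => .send a (subst Q k P)
  | k, .recv a P => .recv a (subst Q k P)
  | k, .ichoice P1 P2 => .ichoice (subst Q k P1) (subst Q k P2)
  | k, .echoice P1 P2 => .echoice (subst Q k P1) (subst Q k P2)
  | k, .var m => if m = k then Q else .var m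
  | k, .recur P => .recur (subst Q (k+1) P)
  | k, .comm a P => .comm a (subst Q k P)
  | k, .buf a P => .buf a (subst Q k P)
  | _, .zero => .zero

/-- Standard (reduction) semantics of compositions `P ∥ Q`. -/
inductive Step {Act : Type} : Proc Act × Proc Act → Proc Act × Proc Act → Prop where
  | commitL {P P' Q : Proc Act} {a : Act} : IBr P a P' → Step (P, Q) (Proc.comm a P', Q)
  | commitR {P Q Q' : Proc Act} {a : Act} : IBr Q a Q' → Step (P, Q) (P, Proc.comm a Q')
  | unfoldL {P Q : Proc Act} : Step (Proc.recur P, Q) (subst (Proc.recur P) 0 P, Q)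
  | unfoldR {P Q : Proc Act} : Step (P, Proc.recur Q) (P, subst (Proc.recur Q) 0 Q)
  | syncL {P Q Q' : Proc Act} {a : Act} : EBr Q a Q' → Step (Proc.comm a P, Q) (P, Q')
  | syncR {P P' Q : Proc Act} {a : Act} : EBr P a P' → Step (P, Proc.comm a Q) (P', Q)

/-- A stuck configuration. -/
def Stuck {Act : Type} (c : Proc Act × Proc Act) : Prop := ∀ c', ¬ Step c c'

/-- Compliance: every reachable stuck configuration has the client succeeded. -/
def Compliant {Act : Type} (P Q : Proc Act) : Prop :=
  ∀ c, Relation.ReflTransGen Step (P, Q) c → Stuck c → c.1 = Proc.success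

/-- Well-formed session types: `WF n U P` means free variables are `< n` and
variables satisfying `¬ U` may only occur guarded (under a prefix). -/
inductive WF {Act : Type} : ℕ → (ℕ → Prop) → Proc Act → Prop where
  | success {n U} : WF n U (Proc.success : Proc Act)
  | send {n U} {a : Act} {P} : WF n (fun _ => True) P → WF n U (Proc.send a P)
  | recv {n U} {a : Act} {P} : WF n (fun _ => True) P → WF n U (Proc.recv a P)
  | ichoice {n U} {P Q : Proc Act} : WF n U P → WF n U Q → WF n U (Proc.ichoice P Q)
  | echoice {n U} {P Q : Proc Act} : WF n U P → WF n U Q → WF n U (Proc.echoice P Q)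
  | var {n U m} : m < n → U m → WF n U (Proc.var m : Proc Act)
  | recur {n U} {P : Proc Act} : WF (n+1) (fun k => ∃ j, k = j + 1 ∧ U j) P → WF n U (Proc.recur P)

/-- Closed, guarded session types. -/
def WF0 {Act : Type} (P : Proc Act) : Prop := WF 0 (fun _ => False) P

/-- Labels of the event structures and of the turn-based semantics:
inputs `a`, outputs `ā`, and the success label ✓. -/
inductive Lbl (Act : Type) where
  | inp : Act → Lbl Act
  | out : Act → Lbl Act
  | tick : Lbl Act

/-- Turn-based labelled semantics with one-position buffers (recursion unfolded tacitly). -/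
inductive TStep {Act : Type} : Proc Act × Proc Act → Lbl Act → Proc Act × Proc Act → Prop where
  | outL {P P' R : Proc Act} {a : Act} : IBr P a P' → TStep (P, R) (Lbl.out a) (Proc.buf a P', R)
  | outR {P R R' : Proc Act} {a : Act} : IBr R a R' → TStep (P, R) (Lbl.out a) (P, Proc.buf a R')
  | inL {P P' R : Proc Act} {a : Act} : EBr P a P' → TStep (P, Proc.buf a R) (Lbl.inp a) (P', R)
  | inR {P R R' : Proc Act} {a : Act} : EBr R a R' → TStep (Proc.buf a P, R) (Lbl.inp a) (P, R')
  | tickL {P : Proc Act} : TStep (Proc.success, P) Lbl.tick (Proc.zero, P)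
  | tickR {P : Proc Act} : TStep (P, Proc.success) Lbl.tick (P, Proc.zero)
  | unfL {P Q c l} : TStep (subst (Proc.recur P) 0 P, Q) l c → TStep (Proc.recur P, Q) l c
  | unfR {P Q c l} : TStep (P, subst (Proc.recur Q) 0 Q) l c → TStep (P, Proc.recur Q) l c

/-! ### ES denotation of session types -/

/-- Canonical event renaming used for freshness: prepend `n` to the path. -/
def shiftE {Ppt : Type} (n : ℕ) : Ppt × List ℕ → Ppt × List ℕ := fun e => (e.1, n :: e.2)

/-- Rename all events of `E` by `shiftE n`. -/
def shiftES {Ppt Act : Type} (n : ℕ) (E : LES (Ppt × List ℕ) Act) : LES (Ppt × List ℕ) Act :=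
  ⟨shiftE n '' E.events,
   fun e e' => ∃ d d', e = shiftE n d ∧ e' = shiftE n d' ∧ E.conf d d',
   fun X e => ∃ Y d, X = shiftE n '' Y ∧ e = shiftE n d ∧ E.enab Y d,
   fun e a => ∃ d, e = shiftE n d ∧ E.lab d a⟩

/-- Prefixing with a fresh event `ea` labelled `α`. -/
def prefixES {Ev Act : Type} (ea : Ev) (α : Act) (E : LES Ev Act) : LES Ev Act :=
  ⟨insert ea E.events, E.conf,
   fun X e => (X = ∅ ∧ e = ea) ∨ ∃ Y, E.enab Y e ∧ X = insert ea Y,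
   fun e a => (e = ea ∧ a = α) ∨ E.lab e a⟩

/-- Choice: disjoint union with initial events of different branches in conflict. -/
def choiceES {Ev Act : Type} (E1 E2 : LES Ev Act) : LES Ev Act :=
  ⟨E1.events ∪ E2.events,
   fun e e' => E1.conf e e' ∨ E2.conf e e' ∨
     (E1.enab ∅ e ∧ E2.enab ∅ e') ∨ (E2.enab ∅ e ∧ E1.enab ∅ e'),
   fun X e => E1.enab X e ∨ E2.enab X e,
   fun e a => E1.lab e a ∨ E2.lab e a⟩

/-- Denotation of ✓: a single ✓-labelled enabled event of `A`. -/
def successES {Ppt Act : Type} (A : Ppt) : LES (Ppt × List ℕ) (Lbl Act) :=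
  ⟨{(A, ([] : List ℕ))}, fun _ _ => False,
   fun X e => X = ∅ ∧ e = (A, []),
   fun e l => e = (A, []) ∧ l = Lbl.tick⟩

/-- Extend an environment with a new denotation for variable 0. -/
def consEnv {Ev Act : Type} (E : LES Ev Act) (ρ : ℕ → LES Ev Act) : ℕ → LES Ev Act
  | 0 => E
  | k + 1 => ρ k

/-- ES denotation `⟦P⟧_A ρ` of a session type, all events owned by `A`. -/
def semST {Act Ppt : Type} (A : Ppt) :
    (ℕ → LES (Ppt × List ℕ) (Lbl Act)) → Proc Act → LES (Ppt × List ℕ) (Lbl Act)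
  | _, .success => successES A
  | ρ, .send a P => prefixES (A, []) (Lbl.out a) (shiftES 0 (semST A ρ P))
  | ρ, .recv a P => prefixES (A, []) (Lbl.inp a) (shiftES 0 (semST A ρ P))
  | ρ, .ichoice P Q => choiceES (shiftES 0 (semST A ρ P)) (shiftES 1 (semST A ρ Q))
  | ρ, .echoice P Q => choiceES (shiftES 0 (semST A ρ P)) (shiftES 1 (semST A ρ Q))
  | ρ, .var m => ρ m
  | ρ, .recur P => fixES (fun E => semST A (consEnv E ρ) P)
  | _, .comm _ _ => emptyES
  | _, .buf _ _ => emptyES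
  | _, .zero => emptyES

/-- The complementary label. -/
def coLbl {Act : Type} : Lbl Act → Lbl Act
  | .inp a => .out a
  | .out a => .inp a
  | .tick => .tick

/-- Co-actions (outputs and ✓). -/
def isCo {Act : Type} : Lbl Act → Prop
  | .inp _ => False
  | _ => True

/-- `e'` (in `Ei`) is matched by the synchronizing event `e''` (in `Ej`). -/
def LabMatch {Ev Act : Type} (Ei Ej : LES Ev (Lbl Act)) (e' e'' : Ev) : Prop :=
  ∃ l, Ei.lab e' l ∧ Ej.lab e'' (coLbl l)

/-- Composed enabling for a co-action event of side `i`. -/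
def parEnabCo {Ev Act : Type} (Ei Ej : LES Ev (Lbl Act)) (Z : Set Ev) (e : Ev) : Prop :=
  ∃ X Y, Ei.enab X e ∧ (∃ l, Ei.lab e l ∧ isCo l) ∧ Y ⊆ Ej.events ∧
    (∀ e' ∈ X, ∃ e'' ∈ Y, LabMatch Ei Ej e' e'') ∧ Z = X ∪ Y

/-- Composed enabling for an input event of side `i` (needs its own co-event `eh`). -/
def parEnabIn {Ev Act : Type} (Ei Ej : LES Ev (Lbl Act)) (Z : Set Ev) (e : Ev) : Prop :=
  ∃ X Y eh a, Ei.enab X e ∧ Ei.lab e (Lbl.inp a) ∧ Y ⊆ Ej.events ∧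
    eh ∈ Ej.events ∧ Ej.lab eh (Lbl.out a) ∧
    (∀ e' ∈ X, ∃ e'' ∈ Y, LabMatch Ei Ej e' e'') ∧ Z = X ∪ Y ∪ {eh}

/-- ES denotation of a composition `P₁ ∥ P₂`, given the two sides. -/
def parES {Ev Act : Type} (E1 E2 : LES Ev (Lbl Act)) : LES Ev (Lbl Act) :=
  ⟨E1.events ∪ E2.events,
   fun e e' => E1.conf e e' ∨ E2.conf e e',
   fun Z e => parEnabCo E1 E2 Z e ∨ parEnabCo E2 E1 Z e ∨
              parEnabIn E1 E2 Z e ∨ parEnabIn E2 E1 Z e,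
   fun e l => E1.lab e l ∨ E2.lab e l⟩

/-- Transitions of the LTS `ETS(E)`: fire an `∅`-enabled event, pass to the remainder. -/
def ETStep {Ev Act : Type} (E : LES Ev Act) (l : Act) (E' : LES Ev Act) : Prop :=
  ∃ e, E.enab ∅ e ∧ E.lab e l ∧ E' = remainder E e

/-- Payoff of `A`: finite plays must contain a ✓-labelled event of `A`. -/
def payoffOf {Act Ppt : Type} (A : Ppt) (E : LES (Ppt × List ℕ) (Lbl Act)) :
    Set (ℕ → Option (Ppt × List ℕ)) :=
  {σ | (∃ i, σ i = none) → ∃ j e, σ j = some e ∧ e.1 = A ∧ E.lab e Lbl.tick}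

/-- The contract `𝓒_A(P)` of a session type. -/
noncomputable def contractOf {Act Ppt : Type} [DecidableEq Ppt] (A : Ppt) (P : Proc Act) :
    Contract (Ppt × List ℕ) (Lbl Act) Ppt :=
  ⟨semST A (fun _ => emptyES) P,
   fun X => if X = A then some (payoffOf A (semST A (fun _ => emptyES) P)) else none⟩

/-- Composition of (session-type) contracts: the game is played on the composed ES. -/
noncomputable def ccomp {Ev Act Ppt : Type} (C C' : Contract Ev (Lbl Act) Ppt) :
    Contract Ev (Lbl Act) Ppt :=
  ⟨parES C.es C'.es, fun X => (C.payoff X).orElse (fun _ => C'.payoff X)⟩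

/-- Recursion-free (and variable-free) session types. -/
inductive NoRec {Act : Type} : Proc Act → Prop where
  | success : NoRec (Proc.success : Proc Act)
  | send {a : Act} {P} : NoRec P → NoRec (Proc.send a P)
  | recv {a : Act} {P} : NoRec P → NoRec (Proc.recv a P)
  | ichoice {P Q : Proc Act} : NoRec P → NoRec Q → NoRec (Proc.ichoice P Q)
  | echoice {P Q : Proc Act} : NoRec P → NoRec Q → NoRec (Proc.echoice P Q)

end ESC

/-
In `P ∥ Q` the client may commit to `ā`; `Q` takes its `a` branch and reaches ✓, after which `P`
waits for a partner for `c̄` forever, so `P` is not compliant with `Q`.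

In the game `A` plays only the events of its `b̄` branch. As `A` never plays `ā`, no event of
`B`'s `a` branch can ever be enabled, so every play stays inside the four events of the two
`b`-branches; fairness makes `A` play `b̄` and, once `B` has received `b`, its ✓. Either `B` then
plays its ✓ too, and everybody is innocent while `A` has succeeded, or `B` stops before, leaving an
enabled event of its own: `B` is culpable and `A` is not.
-/

namespace ESC

theorem CF.mono {Ev : Type} {C : Ev → Ev → Prop} {X Y : Set Ev} (hX : CF C X) (hYX : Y ⊆ X) :
    CF C Y :=
  fun x hx y hy => hX x (hYX hx) y (hYX hy)

section Plays

variable {Ev Act : Type} {E : LES Ev Act} {σ : ℕ → Option Ev} {i : ℕ} {e : Ev}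

theorem prefixSet_zero (σ : ℕ → Option Ev) : prefixSet σ 0 = ∅ := by
  simp [prefixSet]

theorem prefixSet_succ_of_eq_none (h : σ i = none) : prefixSet σ (i + 1) = prefixSet σ i := by
  ext x
  refine ⟨fun ⟨j, hj, hx⟩ => ⟨j, ?_, hx⟩,
    fun ⟨j, hj, hx⟩ => ⟨j, hj.trans i.lt_succ_self, hx⟩⟩
  rcases Nat.lt_succ_iff_lt_or_eq.1 hj with hj | rfl
  · exact hj
  · simp_all

theorem prefixSet_succ_of_eq_some (h : σ i = some e) :
    prefixSet σ (i + 1) = insert e (prefixSet σ i) := by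
  ext x
  constructor
  · rintro ⟨j, hj, hx⟩
    rcases Nat.lt_succ_iff_lt_or_eq.1 hj with hj | rfl
    · exact Or.inr ⟨j, hj, hx⟩
    · exact Or.inl (Option.some_injective _ (hx.symm.trans h))
  · rintro (rfl | ⟨j, hj, hx⟩)
    · exact ⟨i, i.lt_succ_self, h⟩
    · exact ⟨j, hj.trans i.lt_succ_self, hx⟩

theorem prefixSet_mono (σ : ℕ → Option Ev) : Monotone (prefixSet σ) :=
  fun _ _ hij _ ⟨k, hk, hx⟩ => ⟨k, lt_of_lt_of_le hk hij, hx⟩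

theorem le_of_eq_some_of_notMem_prefixSet {p : ℕ} (hp : σ p = some e)
    (he : e ∉ prefixSet σ i) : i ≤ p :=
  not_lt.1 fun hpi => he ⟨p, hpi, hp⟩

theorem remAfter_conf {x y : Ev} (h : (remAfter E σ i).conf x y) : E.conf x y := by
  induction i with
  | zero => exact h
  | succ i ih =>
    cases hσ : σ i with
    | none => simp only [remAfter, hσ] at h; exact ih h
    | some e0 => simp only [remAfter, hσ] at h; exact ih h.1

theorem exists_enab_of_remAfter_enab {X : Set Ev} (h : (remAfter E σ i).enab X e) :
    ∃ Z, E.enab Z e ∧ Z \ prefixSet σ i ⊆ X ∧ e ∉ prefixSet σ i := by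
  induction i generalizing X with
  | zero => exact ⟨X, h, by simp [prefixSet_zero], by simp [prefixSet_zero]⟩
  | succ i ih =>
    cases hσ : σ i with
    | none =>
      simp only [remAfter, hσ] at h
      rw [prefixSet_succ_of_eq_none hσ]
      exact ih h
    | some e0 =>
      simp only [remAfter, hσ] at h
      obtain ⟨Y, hY, hne, -, -, rfl⟩ := h
      obtain ⟨Z, hZ, hZY, he⟩ := ih hY
      rw [prefixSet_succ_of_eq_some hσ]
      refine ⟨Z, hZ, fun x ⟨hxZ, hx⟩ =>
        ⟨hZY ⟨hxZ, fun h => hx (Or.inr h)⟩, fun h => hx (Or.inl h)⟩, ?_⟩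
      rintro (rfl | h)
      · exact hne rfl
      · exact he h

theorem remAfter_enab_of_enab {Z : Set Ev} (hZ : E.enab Z e) (he : e ∉ prefixSet σ i)
    (hcf : CF E.conf (insert e (Z ∪ prefixSet σ i))) :
    (remAfter E σ i).enab (Z \ prefixSet σ i) e := by
  induction i with
  | zero => simpa [remAfter, prefixSet_zero] using hZ
  | succ i ih =>
    cases hσ : σ i with
    | none =>
      simp only [remAfter, hσ]
      rw [prefixSet_succ_of_eq_none hσ] at he hcf ⊢
      exact ih he hcf
    | some e0 =>
      simp only [remAfter, hσ]
      rw [prefixSet_succ_of_eq_some hσ] at he hcf ⊢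
      have hsub : insert e (Z ∪ prefixSet σ i) ⊆ insert e (Z ∪ insert e0 (prefixSet σ i)) :=
        Set.insert_subset_insert (Set.union_subset_union_right _ (Set.subset_insert _ _))
      have hmem :
          ∀ x ∈ (Z \ prefixSet σ i) ∪ {e0}, x ∈ insert e (Z ∪ insert e0 (prefixSet σ i)) := by
        rintro x (⟨hx, -⟩ | rfl)
        · exact Or.inr (Or.inl hx)
        · exact Or.inr (Or.inr (Or.inl rfl))
      refine ⟨Z \ prefixSet σ i, ih (fun h => he (Or.inr h)) (hcf.mono hsub),
        fun h => he (Or.inl h), fun h => ?_, fun x hx y hy h => ?_, ?_⟩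
      · exact hcf e (Set.mem_insert _ _) e0 (hmem e0 (Or.inr rfl)) (remAfter_conf h)
      · exact hcf x (hmem x hx) y (hmem y hy) (remAfter_conf h)
      · rw [Set.sdiff_sdiff, Set.union_comm, Set.insert_eq]

theorem isPlayL_append_singleton {L : List Ev} :
    isPlayL E (L ++ [e]) ↔ isPlayL E L ∧ (L.foldl remainder E).enab ∅ e := by
  induction L generalizing E with
  | nil => simp [isPlayL]
  | cons x L ih => simp only [List.cons_append, isPlayL, ih, List.foldl_cons, and_assoc]

theorem remAfter_eq_foldl (E : LES Ev Act) (σ : ℕ → Option Ev) (i : ℕ) :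
    remAfter E σ i = (prefixList σ i).foldl remainder E := by
  induction i with
  | zero => rfl
  | succ i ih => cases hσ : σ i <;> simp [remAfter, prefixList, hσ, ih]

theorem IsPlay.validPos_succ {p : ℕ} (hσ : IsPlay E σ) (hp : σ p ≠ none) :
    validPos σ (p + 1) :=
  fun k hk hk' => hp (hσ.1 k p (Nat.lt_succ_iff.1 hk) hk')

theorem IsPlay.exists_enab (hσ : IsPlay E σ) (h : σ i = some e) :
    ∃ Z ⊆ prefixSet σ i, E.enab Z e ∧ e ∉ prefixSet σ i := by
  obtain ⟨Z, hZ, hZi, he⟩ := exists_enab_of_remAfter_enab (hσ.2 i e h)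
  exact ⟨Z, Set.sdiff_eq_empty.1 (Set.subset_empty_iff.1 hZi), hZ, he⟩

theorem IsPlay.isPlayL_prefixList (hσ : IsPlay E σ) (i : ℕ) : isPlayL E (prefixList σ i) := by
  induction i with
  | zero => trivial
  | succ i ih =>
    cases h : σ i with
    | none => simpa [prefixList, h] using ih
    | some e =>
      simp only [prefixList, h, Option.toList_some]
      exact isPlayL_append_singleton.2 ⟨ih, remAfter_eq_foldl E σ i ▸ hσ.2 i e h⟩

end Plays

section Games

variable {Ev Act Ppt : Type} {π : Ev → Ppt} {E : LES Ev Act} {σ : ℕ → Option Ev} {e : Ev}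

def playAmong (E : LES Ev Act) (T : Set Ev) (L : List Ev) : Set Ev :=
  {e | e ∈ T ∧ isPlayL E (L ++ [e])}

theorem isStrategy_playAmong {A : Ppt} {T : Set Ev} (hT : ∀ e ∈ T, π e = A) :
    IsStrategy π E A (playAmong E T) :=
  fun _ _ e he => ⟨hT e he.1, he.2⟩

theorem FairW.exists_eq_some_of_enab {T Z : Set Ev} {i : ℕ} (hfair : FairW (playAmong E T) σ)
    (hσ : IsPlay E σ) (heT : e ∈ T) (hi : validPos σ i) (hZ : E.enab Z e)
    (hZi : Z ⊆ prefixSet σ i) (hcf : ∀ j, CF E.conf (insert e (prefixSet σ j))) :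
    ∃ p, σ p = some e := by
  by_contra! hne
  have hnot : ∀ j, e ∉ prefixSet σ j := fun j ⟨k, _, hk⟩ => hne k hk
  refine absurd (hfair i e hi fun j hij _ => ⟨heT, ?_⟩) fun ⟨p, _, hp⟩ => hne p hp
  have hZj : Z ⊆ prefixSet σ j := hZi.trans (prefixSet_mono σ hij)
  have hen := remAfter_enab_of_enab hZ (hnot j) (by rw [Set.union_eq_right.2 hZj]; exact hcf j)
  rw [Set.sdiff_eq_empty.2 hZj, remAfter_eq_foldl] at hen
  exact isPlayL_append_singleton.2 ⟨hσ.isPlayL_prefixList j, hen⟩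

theorem not_innocent_of_enab {P : Ppt} {i : ℕ} (hπ : π e = P) (hen : E.enab (prefixSet σ i) e)
    (hnever : ∀ j e', σ j = some e' → e' ≠ e ∧ ¬ E.conf e' e) : ¬ Innocent π E P σ :=
  fun hinn => by
    obtain ⟨j, -, e', hj, hc⟩ := hinn i e hπ hen
    exact hc.elim (hnever j e' hj).2 (hnever j e' hj).1

end Games

section Example

variable {Act Ppt : Type}

def esP (A : Ppt) (a b c : Act) : LES (Ppt × List ℕ) (Lbl Act) :=
  semST A (fun _ => emptyES)
    (Proc.ichoice (Proc.send a (Proc.send c Proc.success)) (Proc.send b Proc.success))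

def esQ (B : Ppt) (a b : Act) : LES (Ppt × List ℕ) (Lbl Act) :=
  semST B (fun _ => emptyES) (Proc.echoice (Proc.recv a Proc.success) (Proc.recv b Proc.success))

def gameES (A B : Ppt) (a b c : Act) : LES (Ppt × List ℕ) (Lbl Act) :=
  parES (esP A a b c) (esQ B a b)

/-- Events are paths in the syntax tree of the session type, `0` selecting the left branch of a
choice or the continuation of a prefix and `1` the right branch: `(A,[1])` is `b̄`, `(A,[1,0])` the
✓ after it, and similarly `b` and its ✓ for `B`. -/
def bBranch (A B : Ppt) : Set (Ppt × List ℕ) := {(A,[1]), (B,[1]), (A,[1,0]), (B,[1,0])}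

variable {A B : Ppt} {a b c : Act} {Z : Set (Ppt × List ℕ)} {x e : Ppt × List ℕ}

theorem esP_enab :
    (esP A a b c).enab Z e ↔
      (Z = ∅ ∧ e = (A,[0])) ∨ (Z = {(A,[0])} ∧ e = (A,[0,0])) ∨
      (Z = {(A,[0]), (A,[0,0])} ∧ e = (A,[0,0,0])) ∨
      (Z = ∅ ∧ e = (A,[1])) ∨ (Z = {(A,[1])} ∧ e = (A,[1,0])) := by
  simp [esP, semST, choiceES, prefixES, shiftES, successES, shiftE, or_and_right, and_or_left,
    exists_or, Set.image_insert_eq, and_assoc, or_assoc]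

theorem esP_lab {l : Lbl Act} :
    (esP A a b c).lab x l ↔
      (x = (A,[0]) ∧ l = Lbl.out a) ∨ (x = (A,[0,0]) ∧ l = Lbl.out c) ∨
      (x = (A,[0,0,0]) ∧ l = Lbl.tick) ∨
      (x = (A,[1]) ∧ l = Lbl.out b) ∨ (x = (A,[1,0]) ∧ l = Lbl.tick) := by
  simp [esP, semST, choiceES, prefixES, shiftES, successES, shiftE, or_and_right, and_or_left,
    exists_or, Set.image_insert_eq, and_assoc, or_assoc]

theorem esP_events :
    (esP A a b c).events = {(A,[1]), (A,[1,0]), (A,[0]), (A,[0,0]), (A,[0,0,0])} := by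
  simp [esP, semST, choiceES, prefixES, shiftES, successES, shiftE, Set.image_insert_eq]

theorem esQ_enab :
    (esQ B a b).enab Z e ↔
      (Z = ∅ ∧ e = (B,[0])) ∨ (Z = {(B,[0])} ∧ e = (B,[0,0])) ∨
      (Z = ∅ ∧ e = (B,[1])) ∨ (Z = {(B,[1])} ∧ e = (B,[1,0])) := by
  simp [esQ, semST, choiceES, prefixES, shiftES, successES, shiftE, and_or_left, exists_or,
    Set.image_insert_eq, and_assoc, or_assoc]

theorem esQ_lab {l : Lbl Act} :
    (esQ B a b).lab x l ↔
      (x = (B,[0]) ∧ l = Lbl.inp a) ∨ (x = (B,[0,0]) ∧ l = Lbl.tick) ∨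
      (x = (B,[1]) ∧ l = Lbl.inp b) ∨ (x = (B,[1,0]) ∧ l = Lbl.tick) := by
  simp [esQ, semST, choiceES, prefixES, shiftES, successES, shiftE, and_or_left, exists_or,
    Set.image_insert_eq, and_assoc, or_assoc]

theorem esQ_events : (esQ B a b).events = {(B,[1]), (B,[1,0]), (B,[0]), (B,[0,0])} := by
  simp [esQ, semST, choiceES, prefixES, shiftES, successES, shiftE, Set.image_insert_eq]

theorem fst_eq_of_mem_esP_events (hx : x ∈ (esP A a b c).events) : x.1 = A := by
  rw [esP_events] at hx
  rcases hx with rfl | rfl | rfl | rfl | rfl <;> rfl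

theorem fst_eq_of_mem_esQ_events (hx : x ∈ (esQ B a b).events) : x.1 = B := by
  rw [esQ_events] at hx
  rcases hx with rfl | rfl | rfl | rfl <;> rfl

theorem gameES_conf {y : Ppt × List ℕ} :
    (gameES A B a b c).conf x y ↔ (x = (A,[0]) ∧ y = (A,[1])) ∨ (x = (A,[1]) ∧ y = (A,[0])) ∨
      (x = (B,[0]) ∧ y = (B,[1])) ∨ (x = (B,[1]) ∧ y = (B,[0])) := by
  simp [gameES, parES, esP, esQ, semST, choiceES, prefixES, shiftES, successES, shiftE,
    and_or_left, exists_or, Set.image_insert_eq, and_assoc, or_assoc,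
    (Set.insert_nonempty _ _).ne_empty.symm]

theorem conflictFree_bBranch : CF (gameES A B a b c).conf (bBranch A B) := by
  intro x hx y hy hxy
  rcases gameES_conf.1 hxy with ⟨rfl, -⟩ | ⟨-, rfl⟩ | ⟨rfl, -⟩ | ⟨-, rfl⟩ <;> simp_all [bBranch]

theorem gameES_enab_a1 : (gameES A B a b c).enab ∅ (A,[1]) := by
  simp [gameES, parES, parEnabCo, esP_enab, esP_lab, isCo]

theorem gameES_enab_a10 : (gameES A B a b c).enab {(A,[1]), (B,[1])} (A,[1,0]) := by
  refine Or.inl ⟨{(A,[1])}, {(B,[1])}, esP_enab.2 (by simp),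
    ⟨Lbl.tick, esP_lab.2 (by simp), trivial⟩, by simp [esQ_events], ?_, Set.insert_eq _ _⟩
  rintro x rfl
  exact ⟨(B,[1]), rfl, Lbl.out b, esP_lab.2 (by simp), esQ_lab.2 (by simp [coLbl])⟩

theorem gameES_enab_b1 (h1 : (A,[1]) ∈ Z) (hZ : Z ⊆ {(A,[1]), (A,[1,0])}) :
    (gameES A B a b c).enab Z (B,[1]) := by
  refine Or.inr (Or.inr (Or.inr ⟨∅, Z, (A,[1]), b, esQ_enab.2 (by simp), esQ_lab.2 (by simp),
    hZ.trans ?_, by simp [esP_events], esP_lab.2 (by simp), by simp, by simp [h1]⟩))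
  simp [esP_events, Set.insert_subset_iff]

theorem gameES_enab_b10 (hAB : A ≠ B) (h1 : (A,[1]) ∈ Z) (h2 : (B,[1]) ∈ Z)
    (hZ : Z ⊆ {(A,[1]), (B,[1]), (A,[1,0])}) : (gameES A B a b c).enab Z (B,[1,0]) := by
  refine Or.inr (Or.inl ⟨{(B,[1])}, Z \ {(B,[1])}, esQ_enab.2 (by simp),
    ⟨Lbl.tick, esQ_lab.2 (by simp), trivial⟩, fun x hx => ?_, ?_, by simp [h2]⟩)
  · rcases hZ hx.1 with rfl | rfl | rfl <;> simp_all [esP_events]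
  · rintro x rfl
    exact ⟨(A,[1]), ⟨h1, by simp [hAB]⟩, Lbl.inp b, esQ_lab.2 (by simp),
      esP_lab.2 (by simp [coLbl])⟩

theorem parEnabCo_esP_cases (hAB : A ≠ B) (hab : a ≠ b)
    (h : parEnabCo (esP A a b c) (esQ B a b) Z e) (hZ : Z ⊆ bBranch A B) :
    (e = (A,[0]) ∧ (A,[1]) ∉ Z) ∨ (e = (A,[1]) ∧ (A,[1]) ∉ Z) ∨
      (e = (A,[1,0]) ∧ (B,[1]) ∈ Z ∧ (A,[1,0]) ∉ Z) := by
  obtain ⟨X, Y, hX, -, hY, hm, rfl⟩ := h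
  have hA0 : (A,[0]) ∉ X ∪ Y := fun h => by simpa [bBranch, hAB] using hZ h
  have hA1 : (A,[1]) ∉ ∅ ∪ Y := fun h =>
    hAB (fst_eq_of_mem_esQ_events (hY (Set.empty_union Y ▸ h)))
  rcases esP_enab.1 hX with ⟨rfl, rfl⟩ | ⟨rfl, rfl⟩ | ⟨rfl, rfl⟩ | ⟨rfl, rfl⟩ | ⟨rfl, rfl⟩
  · exact Or.inl ⟨rfl, hA1⟩
  · exact (hA0 (Or.inl rfl)).elim
  · exact (hA0 (Or.inl (Or.inl rfl))).elim
  · exact Or.inr (Or.inl ⟨rfl, hA1⟩)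
  · obtain ⟨e', he', l, hl1, hl2⟩ := hm _ rfl
    obtain rfl : l = Lbl.out b := by simpa [esP_lab] using hl1
    obtain rfl : e' = (B,[1]) := by simpa [esQ_lab, coLbl, hab.symm] using hl2
    refine Or.inr (Or.inr ⟨rfl, Or.inr he', ?_⟩)
    rintro (h | h)
    · simp at h
    · exact hAB (fst_eq_of_mem_esQ_events (hY h))

theorem parEnabCo_esQ_cases (hAB : A ≠ B) (h : parEnabCo (esQ B a b) (esP A a b c) Z e)
    (hZ : Z ⊆ bBranch A B) : e = (B,[1,0]) ∧ (B,[1]) ∈ Z ∧ (B,[1,0]) ∉ Z := by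
  obtain ⟨X, Y, hX, ⟨l, hl, hco⟩, hY, -, rfl⟩ := h
  rcases esQ_enab.1 hX with ⟨rfl, rfl⟩ | ⟨rfl, rfl⟩ | ⟨rfl, rfl⟩ | ⟨rfl, rfl⟩
  · obtain rfl : l = Lbl.inp a := by simpa [esQ_lab] using hl
    exact hco.elim
  · simpa [bBranch] using hZ (Or.inl rfl)
  · obtain rfl : l = Lbl.inp b := by simpa [esQ_lab] using hl
    exact hco.elim
  · refine ⟨rfl, Or.inl rfl, ?_⟩
    rintro (h | h)
    · simp at h
    · exact hAB (fst_eq_of_mem_esP_events (hY h)).symm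

theorem parEnabIn_esQ_cases (hAB : A ≠ B) (hab : a ≠ b)
    (h : parEnabIn (esQ B a b) (esP A a b c) Z e) (hZ : Z ⊆ bBranch A B) :
    e = (B,[1]) ∧ (B,[1]) ∉ Z := by
  obtain ⟨X, Y, eh, a', hX, hl, hY, heh, hlh, -, rfl⟩ := h
  rcases esQ_enab.1 hX with ⟨rfl, rfl⟩ | ⟨rfl, rfl⟩ | ⟨rfl, rfl⟩ | ⟨rfl, rfl⟩
  · obtain rfl : a' = a := by simpa [esQ_lab] using hl
    rcases hZ (Or.inr rfl) with rfl | rfl | rfl | rfl <;> simp [esP_lab, hab, hAB.symm] at hlh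
  · simpa [bBranch, hAB] using hZ (Or.inl (Or.inl rfl))
  · refine ⟨rfl, ?_⟩
    rintro ((h | h) | h)
    · exact h
    · exact hAB (fst_eq_of_mem_esP_events (hY h)).symm
    · exact hAB (fst_eq_of_mem_esP_events (h ▸ heh)).symm
  · simp [esQ_lab] at hl

theorem gameES_enab_of_subset (hAB : A ≠ B) (hab : a ≠ b) (h : (gameES A B a b c).enab Z e)
    (hZ : Z ⊆ bBranch A B) :
    (e = (A,[0]) ∧ (A,[1]) ∉ Z) ∨ (e = (A,[1]) ∧ (A,[1]) ∉ Z) ∨ (e = (B,[1]) ∧ (B,[1]) ∉ Z) ∨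
      (e = (A,[1,0]) ∧ (B,[1]) ∈ Z ∧ (A,[1,0]) ∉ Z) ∨
      (e = (B,[1,0]) ∧ (B,[1]) ∈ Z ∧ (B,[1,0]) ∉ Z) := by
  rcases h with h | h | ⟨_, _, _, _, _, hl, -⟩ | h
  · have := parEnabCo_esP_cases hAB hab h hZ
    tauto
  · have := parEnabCo_esQ_cases hAB h hZ
    tauto
  · simp [esP_lab] at hl
  · have := parEnabIn_esQ_cases hAB hab h hZ
    tauto

end Example

section Strategy

variable {Act Ppt : Type} {A B : Ppt} {a b c : Act} {σ : ℕ → Option (Ppt × List ℕ)}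
  {x : Ppt × List ℕ} {q : ℕ}

def bStrategy (A B : Ppt) (a b c : Act) : List (Ppt × List ℕ) → Set (Ppt × List ℕ) :=
  playAmong (gameES A B a b c) {(A,[1]), (A,[1,0])}

structure IsFairBPlay (A B : Ppt) (a b c : Act) (σ : ℕ → Option (Ppt × List ℕ)) : Prop where
  isPlay : IsPlay (gameES A B a b c) σ
  conforms : Conforms Prod.fst A (bStrategy A B a b c) σ
  fair : FairW (bStrategy A B a b c) σ

namespace IsFairBPlay

theorem prefixSet_subset_bBranch (hAB : A ≠ B) (hab : a ≠ b) (hσ : IsFairBPlay A B a b c σ)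
    (i : ℕ) : prefixSet σ i ⊆ bBranch A B := by
  induction i with
  | zero => simp [prefixSet_zero]
  | succ i ih =>
    cases h : σ i with
    | none => rwa [prefixSet_succ_of_eq_none h]
    | some x =>
      rw [prefixSet_succ_of_eq_some h]
      refine Set.insert_subset ?_ ih
      obtain ⟨Z, hZi, hZ, -⟩ := hσ.isPlay.exists_enab h
      rcases gameES_enab_of_subset hAB hab hZ (hZi.trans ih) with
        ⟨rfl, -⟩ | ⟨rfl, -⟩ | ⟨rfl, -⟩ | ⟨rfl, -⟩ | ⟨rfl, -⟩
      · simpa using (hσ.conforms i _ h rfl).1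
      all_goals simp [bBranch]

theorem mem_bBranch (hAB : A ≠ B) (hab : a ≠ b) (hσ : IsFairBPlay A B a b c σ) {j : ℕ}
    (h : σ j = some x) : x ∈ bBranch A B :=
  hσ.prefixSet_subset_bBranch hAB hab (j + 1) ⟨j, j.lt_succ_self, h⟩

theorem exists_eq_some_of_enab (hAB : A ≠ B) (hab : a ≠ b) (hσ : IsFairBPlay A B a b c σ)
    (hx : x ∈ ({(A,[1]), (A,[1,0])} : Set (Ppt × List ℕ))) {i : ℕ} (hi : validPos σ i)
    {Z : Set (Ppt × List ℕ)} (hZ : (gameES A B a b c).enab Z x) (hZi : Z ⊆ prefixSet σ i) :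
    ∃ p, σ p = some x := by
  refine hσ.fair.exists_eq_some_of_enab hσ.isPlay hx hi hZ hZi fun j => conflictFree_bBranch.mono ?_
  refine Set.insert_subset ?_ (hσ.prefixSet_subset_bBranch hAB hab j)
  rcases hx with rfl | rfl <;> simp [bBranch]

theorem exists_eq_a1 (hAB : A ≠ B) (hab : a ≠ b) (hσ : IsFairBPlay A B a b c σ) :
    ∃ p, σ p = some (A,[1]) :=
  hσ.exists_eq_some_of_enab hAB hab (Or.inl rfl) (fun k hk => absurd hk k.not_lt_zero)
    gameES_enab_a1 (Set.empty_subset _)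

theorem exists_eq_a10 (hAB : A ≠ B) (hab : a ≠ b) (hσ : IsFairBPlay A B a b c σ)
    (hq : σ q = some (B,[1])) : ∃ p, σ p = some (A,[1,0]) := by
  obtain ⟨p, hp⟩ := hσ.exists_eq_a1 hAB hab
  have hv : validPos σ (max p q + 1) :=
    hσ.isPlay.validPos_succ (by rcases max_choice p q with h | h <;> simp [h, hp, hq])
  refine hσ.exists_eq_some_of_enab hAB hab (Or.inr rfl) hv gameES_enab_a10 ?_
  rintro x (rfl | rfl)
  · exact ⟨p, by omega, hp⟩
  · exact ⟨q, by omega, hq⟩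

theorem exists_eq_b1_of_eq_b10 (hAB : A ≠ B) (hab : a ≠ b) (hσ : IsFairBPlay A B a b c σ)
    (hq : σ q = some (B,[1,0])) : ∃ p, σ p = some (B,[1]) := by
  obtain ⟨Z, hZi, hZ, -⟩ := hσ.isPlay.exists_enab hq
  have hB1 : (B,[1]) ∈ Z := by
    rcases gameES_enab_of_subset hAB hab hZ (hZi.trans (hσ.prefixSet_subset_bBranch hAB hab q))
      with h | h | h | h | h <;> simp_all
  obtain ⟨p, -, hp⟩ := hZi hB1
  exact ⟨p, hp⟩

theorem innocent_of_fired (hAB : A ≠ B) (hab : a ≠ b) (hσ : IsFairBPlay A B a b c σ) {P : Ppt}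
    (hfired : ∀ i x, x.1 = P → x ∈ bBranch A B → (gameES A B a b c).enab (prefixSet σ i) x →
      ∃ p, σ p = some x) :
    Innocent Prod.fst (gameES A B a b c) P σ := by
  intro i x hP hen
  rcases gameES_enab_of_subset hAB hab hen (hσ.prefixSet_subset_bBranch hAB hab i) with
    ⟨rfl, hA1⟩ | ⟨rfl, hx⟩ | ⟨rfl, hx⟩ | ⟨rfl, -, hx⟩ | ⟨rfl, -, hx⟩
  · obtain ⟨p, hp⟩ := hσ.exists_eq_a1 hAB hab
    exact ⟨p, le_of_eq_some_of_notMem_prefixSet hp hA1, _, hp, Or.inl (gameES_conf.2 (by simp))⟩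
  all_goals
    obtain ⟨p, hp⟩ := hfired i _ hP (by simp [bBranch]) hen
    exact ⟨p, le_of_eq_some_of_notMem_prefixSet hp hx, _, hp, Or.inr rfl⟩

theorem innocent_a (hAB : A ≠ B) (hab : a ≠ b) (hσ : IsFairBPlay A B a b c σ) :
    Innocent Prod.fst (gameES A B a b c) A σ := by
  refine hσ.innocent_of_fired hAB hab fun i x hx hxR hen => ?_
  rcases hxR with rfl | rfl | rfl | rfl
  · exact hσ.exists_eq_a1 hAB hab
  · exact absurd hx hAB.symm
  · have hB1 : (B,[1]) ∈ prefixSet σ i := by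
      rcases gameES_enab_of_subset hAB hab hen (hσ.prefixSet_subset_bBranch hAB hab i) with
        h | h | h | h | h <;> simp_all
    obtain ⟨q, -, hq⟩ := hB1
    exact hσ.exists_eq_a10 hAB hab hq
  · exact absurd hx hAB.symm

theorem innocent_of_eq_b10 (hAB : A ≠ B) (hab : a ≠ b) (hσ : IsFairBPlay A B a b c σ) {r : ℕ}
    (hq : σ q = some (B,[1])) (hr : σ r = some (B,[1,0])) (P : Ppt) :
    Innocent Prod.fst (gameES A B a b c) P σ := by
  refine hσ.innocent_of_fired hAB hab fun _ x _ hxR _ => ?_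
  rcases hxR with rfl | rfl | rfl | rfl
  · exact hσ.exists_eq_a1 hAB hab
  · exact ⟨q, hq⟩
  · exact hσ.exists_eq_a10 hAB hab hq
  · exact ⟨r, hr⟩

theorem not_innocent_b_of_ne_b1 (hAB : A ≠ B) (hab : a ≠ b) (hσ : IsFairBPlay A B a b c σ)
    (hB1 : ∀ p, σ p ≠ some (B,[1])) : ¬ Innocent Prod.fst (gameES A B a b c) B σ := by
  obtain ⟨p, hp⟩ := hσ.exists_eq_a1 hAB hab
  have hsub : prefixSet σ (p + 1) ⊆ {(A,[1]), (A,[1,0])} := by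
    rintro x ⟨k, -, hk⟩
    rcases hσ.mem_bBranch hAB hab hk with rfl | rfl | rfl | rfl
    · simp
    · exact (hB1 k hk).elim
    · simp
    · obtain ⟨q, hq⟩ := hσ.exists_eq_b1_of_eq_b10 hAB hab hk
      exact (hB1 q hq).elim
  refine not_innocent_of_enab rfl (gameES_enab_b1 ⟨p, p.lt_succ_self, hp⟩ hsub)
    fun j e' hj => ⟨fun h => hB1 j (h ▸ hj), fun hc => ?_⟩
  have := hσ.mem_bBranch hAB hab hj
  rcases gameES_conf.1 hc with ⟨-, h⟩ | ⟨-, h⟩ | ⟨rfl, -⟩ | ⟨-, h⟩ <;> simp_all [bBranch]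

theorem not_innocent_b_of_ne_b10 (hAB : A ≠ B) (hab : a ≠ b) (hσ : IsFairBPlay A B a b c σ)
    (hq : σ q = some (B,[1])) (hB10 : ∀ p, σ p ≠ some (B,[1,0])) :
    ¬ Innocent Prod.fst (gameES A B a b c) B σ := by
  obtain ⟨p, hp⟩ := hσ.exists_eq_a1 hAB hab
  have hsub : prefixSet σ (max p q + 1) ⊆ {(A,[1]), (B,[1]), (A,[1,0])} := by
    rintro x ⟨k, -, hk⟩
    rcases hσ.mem_bBranch hAB hab hk with rfl | rfl | rfl | rfl
    iterate 3 simp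
    exact (hB10 k hk).elim
  refine not_innocent_of_enab rfl (gameES_enab_b10 hAB ⟨p, by omega, hp⟩ ⟨q, by omega, hq⟩ hsub)
    fun j e' hj => ⟨fun h => hB10 j (h ▸ hj), fun hc => ?_⟩
  rcases gameES_conf.1 hc with ⟨-, h⟩ | ⟨-, h⟩ | ⟨-, h⟩ | ⟨-, h⟩ <;> simp at h

theorem wins [DecidableEq Ppt] (hAB : A ≠ B) (hab : a ≠ b) (hσ : IsFairBPlay A B a b c σ) :
    Wins Prod.fst
      (ccomp
        (contractOf A
          (Proc.ichoice (Proc.send a (Proc.send c Proc.success)) (Proc.send b Proc.success)))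
        (contractOf B (Proc.echoice (Proc.recv a Proc.success) (Proc.recv b Proc.success))))
      A σ := by
  by_cases hB1 : ∃ q, σ q = some (B,[1])
  · obtain ⟨q, hq⟩ := hB1
    by_cases hB10 : ∃ r, σ r = some (B,[1,0])
    · obtain ⟨r, hr⟩ := hB10
      obtain ⟨p, hp⟩ := hσ.exists_eq_a10 hAB hab hq
      refine Or.inl ⟨payoffOf A (esP A a b c), by simp [ccomp, contractOf, esP], ?_,
        hσ.innocent_of_eq_b10 hAB hab hq hr⟩
      exact fun _ => ⟨p, _, hp, rfl, esP_lab.2 (by simp)⟩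
    · push Not at hB10
      exact Or.inr ⟨hσ.innocent_a hAB hab, B, hAB.symm, hσ.not_innocent_b_of_ne_b10 hAB hab hq hB10⟩
  · push Not at hB1
    exact Or.inr ⟨hσ.innocent_a hAB hab, B, hAB.symm, hσ.not_innocent_b_of_ne_b1 hAB hab hB1⟩

end IsFairBPlay

end Strategy

theorem not_compliant {Act : Type} (a b c : Act) :
    ¬ Compliant
      (Proc.ichoice (Proc.send a (Proc.send c Proc.success)) (Proc.send b Proc.success))
      (Proc.echoice (Proc.recv a Proc.success) (Proc.recv b Proc.success)) := by
  intro hcompl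
  have hreach : Relation.ReflTransGen Step
      (Proc.ichoice (Proc.send a (Proc.send c Proc.success)) (Proc.send b Proc.success),
        Proc.echoice (Proc.recv a Proc.success) (Proc.recv b Proc.success))
      (Proc.comm c Proc.success, Proc.success) :=
    .head (Step.commitL (IBr.il IBr.send)) <| .head (Step.syncL (EBr.el EBr.recv)) <|
      .single (Step.commitL IBr.send)
  have hstuck : Stuck ((Proc.comm c Proc.success, Proc.success) : Proc Act × Proc Act) := by
    intro _ hs
    cases hs with
    | commitL h => cases h
    | commitR h => cases h
    | syncL h => cases h
  simpa using hcompl _ hreach hstuck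

theorem agreement_not_compliance_general {Act Ppt : Type} [DecidableEq Ppt]
    (A B : Ppt) (hAB : A ≠ B) (a b c : Act)
    (hab : a ≠ b) :
    ¬ Compliant
        (Proc.ichoice (Proc.send a (Proc.send c Proc.success)) (Proc.send b Proc.success))
        (Proc.echoice (Proc.recv a Proc.success) (Proc.recv b Proc.success)) ∧
    ∃ S, WinningFor Prod.fst
      (ccomp
        (contractOf A (Proc.ichoice (Proc.send a (Proc.send c Proc.success)) (Proc.send b Proc.success)))
        (contractOf B (Proc.echoice (Proc.recv a Proc.success) (Proc.recv b Proc.success))))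
      A S :=
  ⟨not_compliant a b c, bStrategy A B a b c,
    isStrategy_playAmong (by rintro e (rfl | rfl) <;> rfl),
    fun _ hplay hconf hfair => IsFairBPlay.wins hAB hab ⟨hplay, hconf, hfair⟩⟩

/-- Agreement is strictly weaker than compliance: for `P = ā.c̄ ⊕ b̄` and
`Q = a + b`, `P` is not compliant with `Q`, yet `A` has a winning strategy in
`𝓒_A(P) | 𝓒_B(Q)`. -/
theorem agreement_not_compliance {Act Ppt : Type} [DecidableEq Ppt]
    (A B : Ppt) (hAB : A ≠ B) (a b c : Act)
    (hab : a ≠ b) (hac : a ≠ c) (hbc : b ≠ c) :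
    ¬ Compliant
        (Proc.ichoice (Proc.send a (Proc.send c Proc.success)) (Proc.send b Proc.success))
        (Proc.echoice (Proc.recv a Proc.success) (Proc.recv b Proc.success)) ∧
    ∃ S, WinningFor Prod.fst
      (ccomp
        (contractOf A (Proc.ichoice (Proc.send a (Proc.send c Proc.success)) (Proc.send b Proc.success)))
        (contractOf B (Proc.echoice (Proc.recv a Proc.success) (Proc.recv b Proc.success))))
      A S :=
  agreement_not_compliance_general A B hAB a b c hab

end ESC
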